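/- arXiv:2508.06043 — 2 statements merged into one kernel-verified Lean document; each statement's English description precedes it below -/
import Mathlib

section
/- Let F be a graph with at least one vertex, let t ≥ 1 be an integer, and let H be an F-free graph. Then the join K_t ∨ H is (t+1)F-free. -/
open Finset

/-- `F.ContainsCopy G` means `G` contains a subgraph isomorphic to `F`,
i.e. there is an injective graph homomorphism from `F` to `G`. -/
def SimpleGraph.ContainsCopy {α β : Type*} (F : SimpleGraph α) (G : SimpleGraph β) : Prop :=
  ∃ f : F →g G, Function.Injective f

/-- `F.FreeIn G` means `G` is `F`-free. -/
def SimpleGraph.FreeIn {α β : Type*} (F : SimpleGraph α) (G : SimpleGraph β) : Prop :=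
  ¬ F.ContainsCopy G

/-- `cliqueCount G r` is the number of `r`-cliques of `G` (copies of `K_r`). -/
noncomputable def cliqueCount {β : Type*} (G : SimpleGraph β) (r : ℕ) : ℕ :=
  Nat.card {s : Finset β // G.IsNClique r s}

/-- `cliqueCountOn G r v` is the number of `r`-cliques of `G` containing the vertex `v`. -/
noncomputable def cliqueCountOn {β : Type*} (G : SimpleGraph β) (r : ℕ) (v : β) : ℕ :=
  Nat.card {s : Finset β // G.IsNClique r s ∧ v ∈ s}

/-- The generalized Turán number `ex(n, K_r, F)`: the maximum number of `r`-cliques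
in an `F`-free graph on `n` vertices. -/
noncomputable def exTuran {α : Type*} (n r : ℕ) (F : SimpleGraph α) : ℕ :=
  sSup {m : ℕ | ∃ G : SimpleGraph (Fin n), F.FreeIn G ∧ m = cliqueCount G r}

/-- `multiCopies m F` is the vertex-disjoint union of `m` copies of `F`. -/
def multiCopies {α : Type*} (m : ℕ) (F : SimpleGraph α) : SimpleGraph (Fin m × α) where
  Adj x y := x.1 = y.1 ∧ F.Adj x.2 y.2
  symm := ⟨fun _ _ h => ⟨h.1.symm, h.2.symm⟩⟩
  loopless := ⟨fun x h => F.loopless.irrefl _ h.2⟩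

/-- The join `G ∨ H` of two vertex-disjoint graphs: their disjoint union together with
all edges between them. -/
def joinG {α β : Type*} (G : SimpleGraph α) (H : SimpleGraph β) : SimpleGraph (α ⊕ β) where
  Adj x y := match x, y with
    | Sum.inl u, Sum.inl v => G.Adj u v
    | Sum.inr u, Sum.inr v => H.Adj u v
    | _, _ => True
  symm := by constructor; rintro (u|u) (v|v) h <;> first | exact h.symm | trivial
  loopless := by constructor; rintro (u|u) h <;> exact absurd h (by simp)

/-!
Each of the `m` copies of `F` in `G ∨ H` either lies entirely in `H`, which is impossible when
`H` is `F`-free, or meets `G`. Since the copies are disjoint, at most `|V(G)|` of them can meet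
`G`, so `G ∨ H` is `mF`-free as soon as `m > |V(G)|`; for `G = K_t` take `m = t + 1`.
-/

section

variable {α β γ : Type*}

def multiCopies.inclusion (m : ℕ) (F : SimpleGraph α) (i : Fin m) : F →g multiCopies m F where
  toFun a := (i, a)
  map_rel' h := ⟨rfl, h⟩

theorem SimpleGraph.ContainsCopy.of_joinG_of_forall_inr {F : SimpleGraph α}
    {G : SimpleGraph γ} {H : SimpleGraph β} {f : F →g joinG G H} (hf : Function.Injective f)
    (h : ∀ x, ∃ w, f x = Sum.inr w) : F.ContainsCopy H := by
  choose g hg using h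
  refine ⟨⟨g, fun {p q} hpq => ?_⟩, fun p q hpq => hf ?_⟩
  · have hadj := f.map_adj hpq
    rwa [hg, hg] at hadj
  · change g p = g q at hpq
    rw [hg, hg, hpq]

theorem multiCopies_freeIn_joinG [Fintype γ] {F : SimpleGraph α} {m : ℕ} (G : SimpleGraph γ)
    {H : SimpleGraph β} (hH : F.FreeIn H) (hm : Fintype.card γ < m) :
    (multiCopies m F).FreeIn (joinG G H) := by
  rintro ⟨f, hf⟩
  have meets_left : ∀ i, ∃ a v, f (i, a) = Sum.inl v := by
    intro i
    by_contra! h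
    refine hH (SimpleGraph.ContainsCopy.of_joinG_of_forall_inr
      (f := f.comp (multiCopies.inclusion m F i)) (hf.comp (Prod.mk_right_injective i)) fun a => ?_)
    cases hfa : f (i, a) with
    | inl v => exact absurd hfa (h a v)
    | inr w => exact ⟨w, hfa⟩
  choose a v hv using meets_left
  have hv_inj : Function.Injective v := fun i j hij =>
    congrArg Prod.fst (@hf (i, a i) (j, a j) (by rw [hv, hv, hij]))
  exact hm.not_ge (by simpa using Fintype.card_le_of_injective v hv_inj)

end

theorem stmt7_general {α β : Type*} (F : SimpleGraph α) (t : ℕ)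
    (H : SimpleGraph β) (hH : F.FreeIn H) :
    (multiCopies (t + 1) F).FreeIn (joinG (SimpleGraph.completeGraph (Fin t)) H) :=
  multiCopies_freeIn_joinG _ hH (by simp)

/-- if `H` is `F`-free then `K_t ∨ H` is `(t+1)F`-free. -/
theorem stmt7 {α β : Type*} [Nonempty α] (F : SimpleGraph α) (t : ℕ) (ht : 1 ≤ t)
    (H : SimpleGraph β) (hH : F.FreeIn H) :
    (multiCopies (t + 1) F).FreeIn (joinG (SimpleGraph.completeGraph (Fin t)) H) :=
  stmt7_general F t H hH
end

section
/- Let t ≥ r ≥ 3 and k ≥ 2 be integers, and let ε be a real number with 0 < ε < 1/(2k-1). Then there exists N such that for all n ≥ N the following holds: if G is a graph on n vertices containing t+1 distinct vertices each of which lies in at least n^{1+ε}/(4kt) copies of K_r, then G contains t+1 pairwise vertex-disjoint copies of C_{2k}. -/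
/-!
A vertex `v` lying in more than `n * 2 ^ D` copies of `K_{r+2}` sees more than `n * 2 ^ D` copies
of `K_{r+1}` inside its neighbourhood. A vertex set all of whose nonempty subsets contain a vertex
of degree less than `D` spans at most `2 ^ D` nonempty cliques per vertex, so the neighbourhood of
`v` contains a nonempty set `W` of minimum degree at least `D`. Removing a forbidden set `F` with
`#F < D - m` keeps the minimum degree of `W \ F` above `m`, so a greedy path on `m + 1` vertices
of `W \ F` closes through `v` to a copy of `C_{m+2}` avoiding `F`. Since `n ^ (1 + ε) / (4kt)`
eventually exceeds `n * 2 ^ D` for every fixed `D`, the `t + 1` cycles can be chosen one after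
the other, each avoiding the cycles already chosen and the roots still to be used.
-/

open Finset

namespace SimpleGraph

variable {V : Type*} (G : SimpleGraph V)

lemma cons_adj_cons_add_one {m : ℕ} (v : V) (p : Fin (m + 1) → V)
    (hadj : ∀ i : Fin m, G.Adj (p i.castSucc) (p i.succ)) (hv : ∀ i, G.Adj v (p i))
    (j : Fin (m + 2)) :
    G.Adj ((Fin.cons v p : Fin (m + 2) → V) j) ((Fin.cons v p : Fin (m + 2) → V) (j + 1)) := by
  cases j using Fin.lastCases with
  | last =>
    rw [Fin.last_add_one, ← Fin.succ_last, Fin.cons_succ, Fin.cons_zero]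
    exact (hv _).symm
  | cast j =>
    rw [Fin.coeSucc_eq_succ, Fin.cons_succ]
    cases j using Fin.cases with
    | zero => simpa using hv 0
    | succ j => simpa [← Fin.succ_castSucc] using hadj j

variable [Fintype V] [DecidableEq V] [DecidableRel G.Adj]

variable {G} in
lemma IsClique.erase_subset_neighborFinset {s : Finset V} {v : V} (hs : G.IsClique (s : Set V))
    (hv : v ∈ s) : s.erase v ⊆ G.neighborFinset v := fun _ hu =>
  (G.mem_neighborFinset _ _).2 <| hs hv (mem_of_mem_erase hu) (ne_of_mem_erase hu).symm

lemma card_cliques_mem_subset_le (r : ℕ) (v : V) (S : Finset V) :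
    #{s ∈ G.cliqueFinset (r + 1) | v ∈ s ∧ s ⊆ S} ≤
      #{s ∈ G.cliqueFinset r | s ⊆ G.neighborFinset v ∩ S} := by
  refine card_le_card_of_injOn (·.erase v) (fun s hs => ?_) ((erase_injOn' v).mono fun s hs => ?_)
  · simp only [mem_coe, mem_filter, mem_cliqueFinset_iff] at hs ⊢
    obtain ⟨hcl, hv, hsS⟩ := hs
    exact ⟨hcl.erase_of_mem hv, subset_inter (hcl.1.erase_subset_neighborFinset hv)
      ((erase_subset v s).trans hsS)⟩
  · exact (mem_filter.1 hs).2.1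

lemma card_cliques_subset_le_of_degenerate (r D : ℕ) (S : Finset V)
    (hS : ∀ W ⊆ S, W.Nonempty → ∃ w ∈ W, #(G.neighborFinset w ∩ W) < D) :
    #{s ∈ G.cliqueFinset (r + 1) | s ⊆ S} ≤ #S * 2 ^ D := by
  induction S using Finset.strongInduction with
  | _ S ih =>
  obtain rfl | hne := S.eq_empty_or_nonempty
  · simp only [subset_empty, card_empty, zero_mul, nonpos_iff_eq_zero, card_eq_zero,
      filter_eq_empty_iff, mem_cliqueFinset_iff]
    rintro s hs rfl
    simpa using hs.card_eq
  obtain ⟨w, hwS, hw⟩ := hS S Subset.rfl hne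
  have h_avoid : #{s ∈ G.cliqueFinset (r + 1) | s ⊆ S.erase w} ≤ #(S.erase w) * 2 ^ D :=
    ih _ (erase_ssubset hwS) fun W hW => hS W (hW.trans (erase_subset w S))
  have h_through : #{s ∈ G.cliqueFinset (r + 1) | w ∈ s ∧ s ⊆ S} ≤ 2 ^ D :=
    calc _ ≤ #{s ∈ G.cliqueFinset r | s ⊆ G.neighborFinset w ∩ S} :=
          card_cliques_mem_subset_le G r w S
      _ ≤ #(G.neighborFinset w ∩ S).powerset :=
          card_le_card fun s hs => mem_powerset.2 (mem_filter.1 hs).2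
      _ ≤ 2 ^ D := by rw [card_powerset]; exact Nat.pow_le_pow_right two_pos hw.le
  calc #{s ∈ G.cliqueFinset (r + 1) | s ⊆ S}
      = #{s ∈ G.cliqueFinset (r + 1) | s ⊆ S.erase w} +
          #{s ∈ G.cliqueFinset (r + 1) | w ∈ s ∧ s ⊆ S} := by
        rw [← card_filter_add_card_filter_not (fun s => w ∈ s), filter_filter, filter_filter,
          add_comm]
        simp only [subset_erase, and_comm]
    _ ≤ #(S.erase w) * 2 ^ D + 2 ^ D := add_le_add h_avoid h_through
    _ = #S * 2 ^ D := by
        rw [card_erase_of_mem hwS, ← add_one_mul, Nat.sub_one_add_one hne.card_pos.ne']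

/-- Greedy: a path on `m + 1 ≤ d` vertices has fewer than `d` vertices besides its first one,
so the first vertex has a neighbour in `W` off the path. -/
lemma exists_path_of_le_card_neighborFinset_inter (d : ℕ) (W : Finset V)
    (hW : ∀ w ∈ W, d ≤ #(G.neighborFinset w ∩ W)) (hne : W.Nonempty) :
    ∃ p : Fin (d + 1) → V, Function.Injective p ∧
      (∀ i : Fin d, G.Adj (p i.castSucc) (p i.succ)) ∧ ∀ i, p i ∈ W := by
  suffices ∀ m ≤ d, ∃ p : Fin (m + 1) → V, Function.Injective p ∧
      (∀ i : Fin m, G.Adj (p i.castSucc) (p i.succ)) ∧ ∀ i, p i ∈ W from this d le_rfl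
  intro m hm
  induction m with
  | zero =>
    obtain ⟨w, hw⟩ := hne
    exact ⟨fun _ => w, fun i j _ => Subsingleton.elim (α := Fin 1) i j, fun i => i.elim0,
      fun _ => hw⟩
  | succ m ih =>
    obtain ⟨p, hinj, hadj, hpW⟩ := ih (by omega)
    have hcard : #(univ.image (p ∘ Fin.succ)) < #(G.neighborFinset (p 0) ∩ W) :=
      calc #(univ.image (p ∘ Fin.succ)) ≤ m := card_image_le.trans (by simp)
        _ < _ := hm.trans (hW _ (hpW 0))
    obtain ⟨u, hu, hup⟩ := exists_mem_notMem_of_card_lt_card hcard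
    rw [mem_inter, mem_neighborFinset] at hu
    refine ⟨Fin.cons u p, Fin.cons_injective_iff.2 ⟨?_, hinj⟩, fun i => ?_, fun i => ?_⟩
    · rintro ⟨i, rfl⟩
      cases i using Fin.cases with
      | zero => exact G.irrefl hu.1
      | succ i => exact hup (mem_image_of_mem _ (mem_univ i))
    · cases i using Fin.cases with
      | zero => simpa using hu.1.symm
      | succ i => simpa [← Fin.succ_castSucc] using hadj i
    · cases i using Fin.cases with
      | zero => simpa using hu.2
      | succ i => simpa using hpW i

lemma exists_cycle_avoiding (r m D : ℕ) (v : V) (F : Finset V) (hvF : v ∉ F)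
    (hD : m + 1 + #F ≤ D)
    (hv : Fintype.card V * 2 ^ D < #{s ∈ G.cliqueFinset (r + 2) | v ∈ s}) :
    ∃ c : Fin (m + 2) → V, Function.Injective c ∧ (∀ j, G.Adj (c j) (c (j + 1))) ∧
      ∀ j, c j ∉ F := by
  obtain ⟨W, hWN, hWne, hWdeg⟩ : ∃ W ⊆ G.neighborFinset v, W.Nonempty ∧
      ∀ w ∈ W, D ≤ #(G.neighborFinset w ∩ W) := by
    by_contra! h
    have h_deg := card_cliques_subset_le_of_degenerate G r D _ h
    have h_link : #{s ∈ G.cliqueFinset (r + 2) | v ∈ s} ≤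
        #{s ∈ G.cliqueFinset (r + 1) | s ⊆ G.neighborFinset v} := by
      simpa using card_cliques_mem_subset_le G (r + 1) v univ
    have h_card := Nat.mul_le_mul_right (2 ^ D) (card_le_univ (G.neighborFinset v))
    omega
  have hWF : ∀ w ∈ W \ F, m + 1 ≤ #(G.neighborFinset w ∩ (W \ F)) := by
    intro w hw
    have := hWdeg w (mem_sdiff.1 hw).1
    have := le_card_sdiff F (G.neighborFinset w ∩ W)
    rw [← inter_sdiff_assoc]
    omega
  have hWFne : (W \ F).Nonempty := by
    obtain ⟨w, hw⟩ := hWne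
    obtain ⟨u, hu, huF⟩ := exists_mem_notMem_of_card_lt_card (s := F)
      (t := G.neighborFinset w ∩ W) (by have := hWdeg w hw; omega)
    exact ⟨u, mem_sdiff.2 ⟨(mem_inter.1 hu).2, huF⟩⟩
  obtain ⟨p, hpinj, hpadj, hpW⟩ := exists_path_of_le_card_neighborFinset_inter G m (W \ F)
    (fun w hw => (hWF w hw).trans' m.le_succ) hWFne
  have hvp : ∀ i, G.Adj v (p i) := fun i =>
    (G.mem_neighborFinset _ _).1 (hWN (mem_sdiff.1 (hpW i)).1)
  refine ⟨Fin.cons v p, Fin.cons_injective_iff.2 ⟨?_, hpinj⟩,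
    cons_adj_cons_add_one G v p hpadj hvp, fun j => ?_⟩
  · rintro ⟨i, hi⟩
    exact G.irrefl (hi ▸ hvp i)
  · cases j using Fin.cases with
    | zero => simpa using hvF
    | succ j => simpa using (mem_sdiff.1 (hpW j)).2

lemma exists_disjoint_cycles (r m D : ℕ) {p : ℕ} (x : Fin p → V) (hx : Function.Injective x)
    (F : Finset V) (hxF : ∀ a, x a ∉ F) (hD : m + 1 + #F + p * (m + 2) ≤ D)
    (hbig : ∀ a, Fintype.card V * 2 ^ D < #{s ∈ G.cliqueFinset (r + 2) | x a ∈ s}) :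
    ∃ c : Fin p → Fin (m + 2) → V, Function.Injective (Function.uncurry c) ∧
      (∀ a j, G.Adj (c a j) (c a (j + 1))) ∧ ∀ a j, c a j ∉ F := by
  induction p generalizing F with
  | zero => exact ⟨Fin.elim0, fun a => a.1.elim0, fun a => a.elim0, fun a => a.elim0⟩
  | succ p ih =>
    obtain ⟨c, hc_inj, hc_adj, hc_avoid⟩ := ih (x ∘ Fin.succ) (hx.comp (Fin.succ_injective _))
      (insert (x 0) F) (fun a => by simp [hx.ne (Fin.succ_ne_zero a), hxF])
      (by have := card_insert_le (x 0) F; linarith) (fun a => hbig a.succ)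
    have hU : #(F ∪ univ.image (Function.uncurry c)) ≤ #F + p * (m + 2) :=
      calc _ ≤ #F + #(univ.image (Function.uncurry c)) := card_union_le _ _
        _ ≤ #F + #(univ : Finset (Fin p × Fin (m + 2))) := by grw [card_image_le]
        _ = #F + p * (m + 2) := by simp
    have hx0 : x 0 ∉ F ∪ univ.image (Function.uncurry c) := by
      simp only [mem_union, mem_image, mem_univ, true_and, Prod.exists, Function.uncurry_apply_pair,
        not_or, not_exists]
      exact ⟨hxF 0, fun a j h => hc_avoid a j (h ▸ mem_insert_self _ _)⟩
    obtain ⟨c₀, hc₀_inj, hc₀_adj, hc₀_avoid⟩ :=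
      exists_cycle_avoiding G r m D (x 0) _ hx0 (by linarith) (hbig 0)
    have hc₀c : ∀ i a j, c₀ i ≠ c a j := fun i a j h =>
      hc₀_avoid i (mem_union_right _ (mem_image.2 ⟨(a, j), mem_univ _, h.symm⟩))
    refine ⟨Fin.cons c₀ c, ?_, fun a => ?_, fun a => ?_⟩
    · rintro ⟨a, i⟩ ⟨b, j⟩ h
      rcases Fin.eq_zero_or_eq_succ a with rfl | ⟨a, rfl⟩ <;>
        rcases Fin.eq_zero_or_eq_succ b with rfl | ⟨b, rfl⟩ <;>
        simp only [Function.uncurry_apply_pair, Fin.cons_zero, Fin.cons_succ] at h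
      · rw [hc₀_inj h]
      · exact absurd h (hc₀c _ _ _)
      · exact absurd h.symm (hc₀c _ _ _)
      · obtain ⟨rfl, rfl⟩ := Prod.ext_iff.1 (@hc_inj (a, i) (b, j) h)
        rfl
    · cases a using Fin.cases with
      | zero => exact hc₀_adj
      | succ a => exact hc_adj a
    · cases a using Fin.cases with
      | zero => exact fun j hj => hc₀_avoid j (mem_union_left _ hj)
      | succ a => exact fun j hj => hc_avoid a j (mem_insert_of_mem hj)

end SimpleGraph

lemma multiCopies_cycleGraph_containsCopy {V : Type*} {G : SimpleGraph V} {p m : ℕ}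
    (c : Fin p → Fin (m + 2) → V) (hinj : Function.Injective (Function.uncurry c))
    (hadj : ∀ a j, G.Adj (c a j) (c a (j + 1))) :
    (multiCopies p (SimpleGraph.cycleGraph (m + 2))).ContainsCopy G := by
  refine ⟨⟨Function.uncurry c, ?_⟩, hinj⟩
  rintro ⟨a, i⟩ ⟨b, j⟩ ⟨rfl : a = b, h⟩
  rcases SimpleGraph.cycleGraph_adj.1 h with h | h <;> rw [sub_eq_iff_eq_add'] at h <;> subst h
  · exact (hadj a j).symm
  · exact hadj a i

lemma cliqueCountOn_eq_card {V : Type*} [Fintype V] [DecidableEq V] (G : SimpleGraph V)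
    [DecidableRel G.Adj] (r : ℕ) (v : V) :
    cliqueCountOn G r v = #{s ∈ G.cliqueFinset r | v ∈ s} := by
  rw [cliqueCountOn, Nat.card_eq_fintype_card, Fintype.card_subtype, SimpleGraph.cliqueFinset,
    filter_filter]

lemma exists_forall_mul_lt_rpow_div (K : ℝ) {c ε : ℝ} (hc : 0 < c) (hε : 0 < ε) :
    ∃ N : ℕ, ∀ n ≥ N, K * n < (n : ℝ) ^ (1 + ε) / c := by
  have h : ∀ᶠ n : ℕ in Filter.atTop, K * c < (n : ℝ) ^ ε ∧ 1 ≤ n :=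
    (((tendsto_rpow_atTop hε).comp tendsto_natCast_atTop_atTop).eventually_gt_atTop _).and
      (Filter.eventually_ge_atTop 1)
  obtain ⟨N, hN⟩ := Filter.eventually_atTop.1 h
  refine ⟨N, fun n hn => ?_⟩
  obtain ⟨hKc, hn1⟩ := hN n hn
  have hn0 : (0 : ℝ) < n := by exact_mod_cast hn1
  rw [lt_div_iff₀ hc, Real.rpow_add hn0, Real.rpow_one]
  linarith [mul_lt_mul_of_pos_left hKc hn0]

theorem stmt14_general (t r k : ℕ) (htr : r ≤ t) (hr : 3 ≤ r) (hk : 2 ≤ k) (ε : ℝ)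
    (hε1 : 0 < ε) :
    ∃ N : ℕ, ∀ n : ℕ, N ≤ n → ∀ (V : Type) (_ : Fintype V), ∀ G : SimpleGraph V,
      Fintype.card V = n →
      ∀ x : Fin (t + 1) → V, Function.Injective x →
      (∀ i, (n : ℝ) ^ ((1 : ℝ) + ε) / (4 * (k : ℝ) * (t : ℝ)) ≤ (cliqueCountOn G r (x i) : ℝ)) →
      (multiCopies (t + 1) (SimpleGraph.cycleGraph (2 * k))).ContainsCopy G := by
  obtain ⟨m, hm⟩ : ∃ m, 2 * k = m + 2 := ⟨2 * k - 2, by omega⟩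
  obtain ⟨r, rfl⟩ : ∃ r', r = r' + 2 := ⟨r - 2, by omega⟩
  set D := m + 1 + (t + 1) * (m + 2)
  have hkt : (0 : ℝ) < 4 * k * t := by
    have : 0 < k * t := Nat.mul_pos (by omega) (by omega)
    have : (0 : ℝ) < k * t := by exact_mod_cast this
    linarith
  obtain ⟨N, hN⟩ := exists_forall_mul_lt_rpow_div (2 ^ D) hkt hε1
  refine ⟨N, fun n hn V _ G hcard x hx hcount => ?_⟩
  classical
  rw [hm]
  have hbig : ∀ a, Fintype.card V * 2 ^ D < #{s ∈ G.cliqueFinset (r + 2) | x a ∈ s} := by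
    intro a
    have h := (hN n hn).trans_le (hcount a)
    rw [cliqueCountOn_eq_card, mul_comm] at h
    rw [hcard]
    exact_mod_cast h
  obtain ⟨c, hc_inj, hc_adj, -⟩ :=
    G.exists_disjoint_cycles r m D x hx ∅ (by simp) (by simp [D]) hbig
  exact multiCopies_cycleGraph_containsCopy c hc_inj hc_adj

/-- `t+1` vertices in many `K_r`'s give `t+1` disjoint copies of `C_{2k}`. -/
theorem stmt14 (t r k : ℕ) (htr : r ≤ t) (hr : 3 ≤ r) (hk : 2 ≤ k) (ε : ℝ)
    (hε1 : 0 < ε) (hε2 : ε < 1 / (2 * (k : ℝ) - 1)) :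
    ∃ N : ℕ, ∀ n : ℕ, N ≤ n → ∀ (V : Type) (_ : Fintype V), ∀ G : SimpleGraph V,
      Fintype.card V = n →
      ∀ x : Fin (t + 1) → V, Function.Injective x →
      (∀ i, (n : ℝ) ^ ((1 : ℝ) + ε) / (4 * (k : ℝ) * (t : ℝ)) ≤ (cliqueCountOn G r (x i) : ℝ)) →
      (multiCopies (t + 1) (SimpleGraph.cycleGraph (2 * k))).ContainsCopy G :=
  stmt14_general t r k htr hr hk ε hε1
end
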